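/- Let F be a finite field of characteristic 2 with q = |F|. Let W1 be the pencil of conics spanned by (X1+X2)^2 and X1·X2, and let W2 be the pencil spanned by X2^2 and X1·X2. Then (a1(W1), a2r(W1), a2i(W1), a3(W1)) = (1, q/2, q/2, 0) and (a1(W2), a2r(W2), a2i(W2), a3(W2)) = (1, q, 0, 0). In particular, W1 and W2 are not GL(3,F)-equivalent. -/

import Mathlib

/-
Both pencils are spanned by a double line `ℓ²` (`ℓ = X₁ + X₂`, resp. `ℓ = X₂`) and `X₁X₂`, so
their members are `⟨ℓ²⟩` and `⟨X₁X₂ + s ℓ²⟩ = ⟨α X₁² + X₁X₂ + γ X₂²⟩` for `s ∈ F`. The latter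
is a real line pair when `α t² + t + γ` has a root in `F` and an imaginary one otherwise; it is
never a double line. In characteristic 2, `⟨ℓ²⟩` is not a real line pair, because the cross
terms of a product of two linear forms are then the `2 × 2` minors of their coefficients. For
`ℓ = X₂` every `s` gives a root. For `ℓ = X₁ + X₂`, putting `u = s t` shows that a root exists
iff `s²` is in the image of the additive map `u ↦ u² + u`. Its kernel is `{0, 1}`, so exactly
`q/2` values of `s` qualify. Finally, every element of `W₂` is divisible by `X₂`, and linear
substitutions preserve linear factors. So the imaginary line pairs of `W₁` cannot be carried
into `W₂`.
-/

noncomputable section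

open MvPolynomial

namespace Pencils

/-- The space of ternary polynomials over `F`. -/
abbrev Poly (F : Type*) [Field F] : Type _ := MvPolynomial (Fin 3) F

variable {F : Type*} [Field F]

/-- The coefficient of the monomial `X i * X j` in `f` (for `i = j`, of `X i ^ 2`). -/
def qc (f : Poly F) (i j : Fin 3) : F :=
  MvPolynomial.coeff (Finsupp.single i 1 + Finsupp.single j 1) f

/-- A quadratic form over a field of characteristic 2 is singular iff
`a00·a12² + a11·a02² + a22·a01² + a01·a02·a12 = 0`. -/
def IsSingular (f : Poly F) : Prop :=
  qc f 0 0 * qc f 1 2 ^ 2 + qc f 1 1 * qc f 0 2 ^ 2 + qc f 2 2 * qc f 0 1 ^ 2 +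
    qc f 0 1 * qc f 0 2 * qc f 1 2 = 0

/-- A pencil of conics: a 2-dimensional subspace of the space of
homogeneous quadratic forms in `X 0, X 1, X 2`. -/
def IsPencil (W : Submodule F (Poly F)) : Prop :=
  W ≤ homogeneousSubmodule (Fin 3) F 2 ∧ Module.finrank F ↥W = 2

/-- A member of a pencil `W` is a 1-dimensional subspace of `W`. -/
def IsMember (W L : Submodule F (Poly F)) : Prop :=
  L ≤ W ∧ Module.finrank F ↥L = 1

/-- A double line: all nonzero elements are squares of nonzero linear forms. -/
def IsDoubleLine (L : Submodule F (Poly F)) : Prop :=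
  ∀ f ∈ L, f ≠ 0 → ∃ ℓ : Poly F, ℓ.IsHomogeneous 1 ∧ ℓ ≠ 0 ∧ f = ℓ ^ 2

/-- A real line pair: all nonzero elements are products of two linearly
independent linear forms over `F`. -/
def IsRealPair (L : Submodule F (Poly F)) : Prop :=
  ∀ f ∈ L, f ≠ 0 → ∃ ℓ m : Poly F, ℓ.IsHomogeneous 1 ∧ m.IsHomogeneous 1 ∧
    LinearIndependent F ![ℓ, m] ∧ f = ℓ * m

/-- `f` has a nonzero linear form over `F` as a factor. -/
def HasLinearFactor (f : Poly F) : Prop :=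
  ∃ ℓ : Poly F, ℓ.IsHomogeneous 1 ∧ ℓ ≠ 0 ∧ ℓ ∣ f

/-- An imaginary line pair: all nonzero elements are singular with no linear factor over `F`. -/
def IsImagPair (L : Submodule F (Poly F)) : Prop :=
  ∀ f ∈ L, f ≠ 0 → IsSingular f ∧ ¬ HasLinearFactor f

/-- A nonsingular member: all nonzero elements are nonsingular. -/
def IsNonsingularConic (L : Submodule F (Poly F)) : Prop :=
  ∀ f ∈ L, f ≠ 0 → ¬ IsSingular f

/-- `a1 W`: number of members of `W` that are double lines. -/
def a1 (W : Submodule F (Poly F)) : ℕ :=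
  Nat.card {L : Submodule F (Poly F) // IsMember W L ∧ IsDoubleLine L}

/-- `a2r W`: number of members of `W` that are real line pairs. -/
def a2r (W : Submodule F (Poly F)) : ℕ :=
  Nat.card {L : Submodule F (Poly F) // IsMember W L ∧ IsRealPair L}

/-- `a2i W`: number of members of `W` that are imaginary line pairs. -/
def a2i (W : Submodule F (Poly F)) : ℕ :=
  Nat.card {L : Submodule F (Poly F) // IsMember W L ∧ IsImagPair L}

/-- `a3 W`: number of members of `W` that are nonsingular conics. -/
def a3 (W : Submodule F (Poly F)) : ℕ :=
  Nat.card {L : Submodule F (Poly F) // IsMember W L ∧ IsNonsingularConic L}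

/-- A base point of the pencil `W`: a 1-dimensional subspace of `F³` on which
every element of `W` vanishes. -/
def IsBasePoint (W : Submodule F (Poly F)) (P : Submodule F (Fin 3 → F)) : Prop :=
  Module.finrank F ↥P = 1 ∧ ∀ f ∈ W, ∀ v ∈ P, MvPolynomial.eval v f = 0

/-- `b W`: the number of base points of `W`. -/
def b (W : Submodule F (Poly F)) : ℕ :=
  Nat.card {P : Submodule F (Fin 3 → F) // IsBasePoint W P}

/-- The substitution action of a matrix `g` on quadratic forms: `(g • f)(X) = f(g·X)`. -/
def act (g : Matrix (Fin 3) (Fin 3) F) : Poly F →ₗ[F] Poly F :=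
  (MvPolynomial.aeval (fun i => ∑ j : Fin 3, MvPolynomial.C (g i j) * MvPolynomial.X j) :
    Poly F →ₐ[F] Poly F).toLinearMap

end Pencils

section PencilLines

open Module Submodule

variable {K V : Type*} [Field K] [AddCommGroup V] [Module K V]

theorem forall_mem_span_singleton_ne_zero {g : V} (hg : g ≠ 0) {P : V → Prop} :
    (∀ f ∈ K ∙ g, f ≠ 0 → P f) ↔ ∀ c : K, c ≠ 0 → P (c • g) := by
  simp only [mem_span_singleton, forall_exists_index, forall_apply_eq_imp_iff]
  exact forall_congr' fun c => by rw [Ne, smul_eq_zero, or_iff_left hg]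

/-- `Option K` plays the role of the projective line `ℙ¹(K)`. -/
def pencilLine (u v : V) : Option K → Submodule K V
  | none => K ∙ u
  | some s => K ∙ (v + s • u)

variable {u v : V}

theorem pencilLine_le (x : Option K) : pencilLine u v x ≤ span K {u, v} := by
  rcases x with _ | s <;> rw [pencilLine, span_singleton_le_iff_mem]
  · exact subset_span (Set.mem_insert _ _)
  · exact mem_span_pair.2 ⟨s, 1, by rw [one_smul, add_comm]⟩

theorem exists_pencilLine_eq {L : Submodule K V} (hL : L ≤ span K {u, v})
    (hL1 : finrank K L = 1) : ∃ x, pencilLine u v x = L := by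
  obtain ⟨⟨f, hfL⟩, hf0, -⟩ := finrank_eq_one_iff'.1 hL1
  replace hf0 : f ≠ 0 := fun h => hf0 (Subtype.ext h)
  obtain ⟨a, c, rfl⟩ := mem_span_pair.1 (hL hfL)
  rw [eq_span_singleton_of_mem_of_finrank_eq_one hL1 hfL hf0]
  by_cases hc : c = 0
  · have ha : a ≠ 0 := by rintro rfl; simp [hc] at hf0
    refine ⟨none, ?_⟩
    rw [pencilLine, hc, zero_smul, add_zero, span_singleton_smul_eq (Ne.isUnit ha)]
  · refine ⟨some (a / c), ?_⟩
    rw [pencilLine, ← span_singleton_smul_eq (Ne.isUnit hc), smul_add, smul_smul,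
      mul_div_cancel₀ _ hc, add_comm]

variable (huv : LinearIndependent K ![u, v])
include huv

theorem finrank_pencilLine (x : Option K) : finrank K (pencilLine u v x) = 1 := by
  rcases x with _ | s
  · exact finrank_span_singleton (huv.ne_zero 0)
  · refine finrank_span_singleton fun h => ?_
    exact one_ne_zero (huv.eq_zero_of_pair (s := s) (t := 1) (by rw [one_smul, add_comm, h])).2

theorem pencilLine_injective : Function.Injective (pencilLine (K := K) u v) := by
  intro x y h
  rcases x with _ | s <;> rcases y with _ | t <;>
    obtain ⟨z, hz⟩ := span_singleton_eq_span_singleton.1 h <;> rw [Units.smul_def] at hz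
  · exact absurd (huv.eq_of_pair (s := (z : K)) (t := 0) (s' := t) (t' := 1)
      (by linear_combination (norm := module) hz)).2 zero_ne_one
  · exact absurd (huv.eq_of_pair (s := (z : K) * s) (t := (z : K)) (s' := 1) (t' := 0)
      (by linear_combination (norm := module) hz)).2 z.ne_zero
  · obtain ⟨hs, h1⟩ := huv.eq_of_pair (s := (z : K) * s) (t := (z : K)) (s' := t) (t' := 1)
      (by linear_combination (norm := module) hz)
    rw [← hs, h1, one_mul]

theorem card_pencilLine (Φ : Submodule K V → Prop) :
    Nat.card {L : Submodule K V // (L ≤ span K {u, v} ∧ finrank K L = 1) ∧ Φ L} =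
      Nat.card {x : Option K // Φ (pencilLine u v x)} := by
  refine (Nat.card_congr (Equiv.ofBijective
    (fun x => ⟨pencilLine u v x.1, ⟨pencilLine_le x.1, finrank_pencilLine huv x.1⟩, x.2⟩)
    ⟨fun x y h => Subtype.ext (pencilLine_injective huv (congrArg Subtype.val h)), ?_⟩)).symm
  rintro ⟨L, ⟨hL, hL1⟩, hΦ⟩
  obtain ⟨x, rfl⟩ := exists_pencilLine_eq hL hL1
  exact ⟨⟨x, hΦ⟩, rfl⟩

end PencilLines

theorem Nat.card_subtype_option {α : Type*} [Finite α] (p : Option α → Prop) [DecidablePred p] :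
    Nat.card {x // p x} = (if p none then 1 else 0) + Nat.card {a // p (some a)} := by
  have := Fintype.ofFinite α
  simp only [Nat.card_eq_fintype_card, Fintype.card_subtype, Finset.card_filter,
    Fintype.sum_option]

section ArtinSchreier

variable (F : Type*) [Field F] [CharP F 2]

def artinSchreier : F →+ F := (frobenius F 2 : F →+* F).toAddMonoidHom + AddMonoidHom.id F

variable {F}

@[simp] theorem artinSchreier_apply (u : F) : artinSchreier F u = u ^ 2 + u := rfl

theorem mem_ker_artinSchreier {u : F} : u ∈ (artinSchreier F).ker ↔ u = 0 ∨ u = 1 := by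
  rw [AddMonoidHom.mem_ker, artinSchreier_apply, sq, ← mul_add_one, mul_eq_zero,
    CharTwo.add_eq_zero]

theorem exists_root_iff_sq_mem_range (s : F) :
    (∃ t, s * t ^ 2 + t + s = 0) ↔ s ^ 2 ∈ (artinSchreier F).range := by
  have h2 : (2 : F) = 0 := CharTwo.two_eq_zero
  constructor
  · rintro ⟨t, ht⟩
    exact ⟨s * t, by rw [artinSchreier_apply]; linear_combination s * ht - s ^ 2 * h2⟩
  · rintro ⟨u, hu⟩
    rw [artinSchreier_apply] at hu
    rcases eq_or_ne s 0 with rfl | hs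
    · exact ⟨0, by ring⟩
    · refine ⟨u / s, ?_⟩
      field_simp
      linear_combination hu + s ^ 2 * h2

theorem card_range_artinSchreier : 2 * Nat.card (artinSchreier F).range = Nat.card F := by
  have hker : ((artinSchreier F).ker : Set F) = {0, 1} := Set.ext fun u => mem_ker_artinSchreier
  rw [← AddSubgroup.index_ker, ← AddSubgroup.card_mul_index, ← SetLike.coe_sort_coe, hker,
    Nat.card_coe_set_eq, Set.ncard_pair zero_ne_one]

variable [Finite F]

theorem card_exists_root : 2 * Nat.card {s : F // ∃ t, s * t ^ 2 + t + s = 0} = Nat.card F := by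
  rw [← card_range_artinSchreier (F := F)]
  congr 1
  exact Nat.card_congr ((frobeniusEquiv F 2).toEquiv.subtypeEquiv fun s => by
    rw [exists_root_iff_sq_mem_range]; rfl)

theorem card_not_exists_root :
    2 * Nat.card {s : F // ¬ ∃ t, s * t ^ 2 + t + s = 0} = Nat.card F := by
  classical
  have hsum := Nat.card_congr (Equiv.sumCompl fun s : F => ∃ t, s * t ^ 2 + t + s = 0)
  rw [Nat.card_sum] at hsum
  have := card_exists_root (F := F)
  omega

theorem exists_not_exists_root : ∃ s : F, ¬ ∃ t, s * t ^ 2 + t + s = 0 := by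
  by_contra! h
  have : IsEmpty {s : F // ¬ ∃ t, s * t ^ 2 + t + s = 0} := ⟨fun s => s.2 (h s)⟩
  have hcard := card_not_exists_root (F := F)
  rw [Nat.card_of_isEmpty] at hcard
  exact Nat.card_pos.ne hcard

end ArtinSchreier

namespace Pencils

variable {F : Type*} [Field F]

theorem qc_add (f g : Poly F) (i j : Fin 3) : qc (f + g) i j = qc f i j + qc g i j :=
  coeff_add _ _ _

theorem qc_C_mul (c : F) (f : Poly F) (i j : Fin 3) : qc (C c * f) i j = c * qc f i j :=
  coeff_C_mul _ _ _

theorem qc_smul (c : F) (f : Poly F) (i j : Fin 3) : qc (c • f) i j = c * qc f i j :=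
  coeff_smul _ _ _

theorem qc_X_mul_X (k l i j : Fin 3) :
    qc (X k * X l : Poly F) i j = if (k = i ∧ l = j) ∨ (k = j ∧ l = i) then 1 else 0 := by
  rw [qc, X, X, monomial_mul, one_mul, coeff_monomial]
  simp [Finsupp.single_add_single_eq_single_add_single]

theorem isSingular_of_qc_eq_zero {f : Poly F} (h01 : qc f 0 1 = 0) (h02 : qc f 0 2 = 0)
    (h12 : qc f 1 2 = 0) : IsSingular f := by
  simp [IsSingular, h01, h02, h12]

theorem IsSingular.smul {f : Poly F} (hf : IsSingular f) (c : F) : IsSingular (c • f) := by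
  unfold IsSingular at *
  simp only [qc_smul]
  linear_combination c ^ 3 * hf

theorem HasLinearFactor.of_smul {f : Poly F} {c : F} (hc : c ≠ 0)
    (h : HasLinearFactor (c • f)) : HasLinearFactor f := by
  obtain ⟨ℓ, hℓ, hℓ0, hdvd⟩ := h
  refine ⟨ℓ, hℓ, hℓ0, ?_⟩
  rw [← inv_smul_smul₀ hc f, smul_eq_C_mul]
  exact dvd_mul_of_dvd_right hdvd _

def linForm (a : Fin 3 → F) : Poly F := ∑ i, C (a i) * X i

theorem isHomogeneous_linForm (a : Fin 3 → F) : (linForm a).IsHomogeneous 1 :=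
  IsHomogeneous.sum _ _ _ fun i _ => isHomogeneous_C_mul_X (a i) i

theorem coeff_linForm (a : Fin 3 → F) (i : Fin 3) :
    coeff (Finsupp.single i 1) (linForm a) = a i := by
  simp [linForm, coeff_sum, coeff_C_mul, coeff_X, Finsupp.single_left_inj]

theorem exists_eq_linForm {ℓ : Poly F} (hℓ : ℓ.IsHomogeneous 1) : ∃ a, ℓ = linForm a := by
  refine ⟨fun i => coeff (Finsupp.single i 1) ℓ, ?_⟩
  ext d
  by_cases hd : d.degree = 1
  · obtain ⟨i, rfl⟩ : d ∈ Set.range fun i => Finsupp.single i 1 := Finsupp.range_single_one ▸ hd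
    rw [coeff_linForm]
  · rw [hℓ.coeff_eq_zero hd, (isHomogeneous_linForm _).coeff_eq_zero hd]

theorem linForm_smul (c : F) (a : Fin 3 → F) : linForm (c • a) = c • linForm a := by
  simp [linForm, Finset.smul_sum, smul_eq_C_mul, mul_assoc]

theorem eval_linForm (a : Fin 3 → F) (x y : F) :
    eval ![0, x, y] (linForm a) = a 1 * x + a 2 * y := by
  simp [linForm, Fin.sum_univ_three]

theorem qc_linForm_mul_linForm (a b : Fin 3 → F) {i j : Fin 3} (hij : i ≠ j) :
    qc (linForm a * linForm b) i j = a i * b j + a j * b i := by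
  have : linForm a * linForm b = ∑ k, ∑ l, C (a k * b l) * (X k * X l) := by
    simp only [linForm, Finset.sum_mul_sum]
    refine Finset.sum_congr rfl fun k _ => Finset.sum_congr rfl fun l _ => ?_
    rw [map_mul]; ring
  simp only [this, qc_add, qc_C_mul, qc_X_mul_X, Fin.sum_univ_three]
  fin_cases i <;> fin_cases j <;> simp at hij ⊢ <;> ring

theorem linearIndependent_linForm_pair (α t : F) :
    LinearIndependent F ![linForm ![0, 1, t], linForm ![0, α, 1 + α * t]] := by
  have hne : linForm ![0, 1, t] ≠ (0 : Poly F) := fun h => by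
    simpa [coeff_linForm] using congrArg (coeff (Finsupp.single 1 1)) h
  refine (LinearIndependent.pair_iff' hne).2 fun c hc => ?_
  have h1 := congrArg (coeff (Finsupp.single 1 1)) hc
  have h2 := congrArg (coeff (Finsupp.single 2 1)) hc
  simp only [coeff_smul, coeff_linForm, smul_eq_mul] at h1 h2
  simp at h1 h2
  rw [h1] at h2
  exact one_ne_zero (by linear_combination -h2)

theorem exists_ne_zero_linear_eq_zero (a b : F) :
    ∃ x y : F, (x ≠ 0 ∨ y ≠ 0) ∧ a * x + b * y = 0 := by
  by_cases hb : b = 0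
  · exact ⟨0, 1, Or.inr one_ne_zero, by rw [hb]; ring⟩
  · exact ⟨b, -a, Or.inl hb, by ring⟩

theorem isRealPair_span_mul {ℓ m : Poly F} (hℓ : ℓ.IsHomogeneous 1) (hm : m.IsHomogeneous 1)
    (hind : LinearIndependent F ![ℓ, m]) : IsRealPair (F ∙ (ℓ * m)) := by
  have hne : ℓ * m ≠ 0 := mul_ne_zero (hind.ne_zero 0) (hind.ne_zero 1)
  refine (forall_mem_span_singleton_ne_zero hne).2
    fun c hc => ⟨c • ℓ, m, ?_, hm, ?_, (smul_mul_assoc c ℓ m).symm⟩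
  · rw [smul_eq_C_mul]
    exact hℓ.C_mul c
  · refine LinearIndependent.pair_iff.2 fun s t hst => ?_
    rw [smul_smul] at hst
    obtain ⟨hsc, ht⟩ := LinearIndependent.pair_iff.1 hind _ _ hst
    exact ⟨(mul_eq_zero.1 hsc).resolve_right hc, ht⟩

theorem IsRealPair.hasLinearFactor {L : Submodule F (Poly F)} (h : IsRealPair L) {f : Poly F}
    (hf : f ∈ L) (hf0 : f ≠ 0) : HasLinearFactor f := by
  obtain ⟨ℓ, m, hℓ, -, hind, rfl⟩ := h f hf hf0
  exact ⟨ℓ, hℓ, hind.ne_zero 0, dvd_mul_right ℓ m⟩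

theorem isImagPair_span_iff {g : Poly F} (hg0 : g ≠ 0) (hg : IsSingular g) :
    IsImagPair (F ∙ g) ↔ ¬ HasLinearFactor g := by
  refine ⟨fun h => (h g (Submodule.mem_span_singleton_self g) hg0).2, fun h => ?_⟩
  exact (forall_mem_span_singleton_ne_zero hg0).2 fun c hc =>
    ⟨hg.smul c, fun h' => h (h'.of_smul hc)⟩

theorem not_isNonsingularConic_span {g : Poly F} (hg0 : g ≠ 0) (hg : IsSingular g) :
    ¬ IsNonsingularConic (F ∙ g) :=
  fun h => h g (Submodule.mem_span_singleton_self g) hg0 hg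

def binForm (α γ : F) : Poly F := C α * X 1 ^ 2 + X 1 * X 2 + C γ * X 2 ^ 2

theorem qc_binForm_zero (α γ : F) (j : Fin 3) : qc (binForm α γ) 0 j = 0 := by
  fin_cases j <;> simp [binForm, sq, qc_add, qc_C_mul, qc_X_mul_X]

theorem qc_binForm_one_two (α γ : F) : qc (binForm α γ) 1 2 = 1 := by
  simp [binForm, sq, qc_add, qc_C_mul, qc_X_mul_X]

theorem binForm_ne_zero (α γ : F) : binForm α γ ≠ 0 := fun h => by
  simpa [h, qc] using qc_binForm_one_two α γ

theorem isSingular_binForm (α γ : F) : IsSingular (binForm α γ) := by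
  simp [IsSingular, qc_binForm_zero]

section CharTwo

variable [CharP F 2]

theorem qc_sq {ℓ : Poly F} (hℓ : ℓ.IsHomogeneous 1) {i j : Fin 3} (hij : i ≠ j) :
    qc (ℓ ^ 2) i j = 0 := by
  obtain ⟨a, rfl⟩ := exists_eq_linForm hℓ
  rw [sq, qc_linForm_mul_linForm _ _ hij, mul_comm (a j), CharTwo.add_self_eq_zero]

theorem isSingular_sq {ℓ : Poly F} (hℓ : ℓ.IsHomogeneous 1) : IsSingular (ℓ ^ 2) :=
  isSingular_of_qc_eq_zero (qc_sq hℓ (by decide)) (qc_sq hℓ (by decide)) (qc_sq hℓ (by decide))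

theorem exists_qc_mul_ne_zero {ℓ m : Poly F} (hℓ : ℓ.IsHomogeneous 1) (hm : m.IsHomogeneous 1)
    (hind : LinearIndependent F ![ℓ, m]) : ∃ i j, i ≠ j ∧ qc (ℓ * m) i j ≠ 0 := by
  by_contra! hqc
  obtain ⟨a, rfl⟩ := exists_eq_linForm hℓ
  obtain ⟨b, rfl⟩ := exists_eq_linForm hm
  -- in characteristic 2 the cross coefficients `a i * b j + a j * b i` are the minors of `(a, b)`
  have hminor : ∀ i j, a i * b j = a j * b i := by
    intro i j
    rcases eq_or_ne i j with rfl | hij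
    · rfl
    · rw [← CharTwo.add_eq_zero, ← qc_linForm_mul_linForm _ _ hij]
      exact hqc i j hij
  obtain ⟨k, hk⟩ : ∃ k, a k ≠ 0 := by
    by_contra! ha
    refine hind.ne_zero 0 ?_
    simp [linForm, ha]
  refine (LinearIndependent.pair_iff' (hind.ne_zero 0)).1 hind (b k / a k) ?_
  rw [Matrix.cons_val_zero, ← linForm_smul]
  congr 1
  funext j
  rw [Pi.smul_apply, smul_eq_mul, div_mul_eq_mul_div, mul_comm, hminor, mul_div_cancel_left₀ _ hk]

theorem isDoubleLine_span_sq [Finite F] {n : Poly F} (hn : n.IsHomogeneous 1) (hn0 : n ≠ 0) :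
    IsDoubleLine (F ∙ n ^ 2) := by
  refine (forall_mem_span_singleton_ne_zero (pow_ne_zero 2 hn0)).2 fun c hc => ?_
  obtain ⟨d, rfl⟩ := isSquare_of_charTwo' c
  refine ⟨C d * n, hn.C_mul d, mul_ne_zero (C_ne_zero.2 (left_ne_zero_of_mul hc)) hn0, ?_⟩
  rw [smul_eq_C_mul, mul_pow, ← map_pow, sq d]

theorem not_isDoubleLine_span {g : Poly F} {i j : Fin 3} (hij : i ≠ j) (hg : qc g i j ≠ 0) :
    ¬ IsDoubleLine (F ∙ g) := by
  have hg0 : g ≠ 0 := by rintro rfl; exact hg (coeff_zero _)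
  intro h
  obtain ⟨ℓ, hℓ, -, rfl⟩ := h g (Submodule.mem_span_singleton_self g) hg0
  exact hg (qc_sq hℓ hij)

theorem not_isRealPair_span_sq {n : Poly F} (hn : n.IsHomogeneous 1) (hn0 : n ≠ 0) :
    ¬ IsRealPair (F ∙ n ^ 2) := by
  intro h
  obtain ⟨ℓ, m, hℓ, hm, hind, heq⟩ :=
    h _ (Submodule.mem_span_singleton_self _) (pow_ne_zero 2 hn0)
  obtain ⟨i, j, hij, hqc⟩ := exists_qc_mul_ne_zero hℓ hm hind
  exact hqc (heq ▸ qc_sq hn hij)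

theorem binForm_eq_linForm_mul {α γ t : F} (ht : α * t ^ 2 + t + γ = 0) :
    binForm α γ = linForm ![0, 1, t] * linForm ![0, α, 1 + α * t] := by
  have hγ : C γ = (C (α * t ^ 2 + t) : Poly F) := by
    rw [← CharTwo.add_eq_zero.1 ht]
  simp only [binForm, linForm, Fin.sum_univ_three, hγ, Matrix.cons_val_zero, Matrix.cons_val_one,
    Matrix.cons_val_two, Matrix.tail_cons, Matrix.head_cons, map_add, map_mul, map_pow, map_zero,
    map_one, zero_mul, zero_add]
  linear_combination (-(C α * C t * X 1 * X 2 : Poly F)) * CharTwo.two_eq_zero (R := Poly F)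

theorem exists_root_of_nontrivial_zero {α γ x y : F} (hxy : x ≠ 0 ∨ y ≠ 0)
    (h : α * x ^ 2 + x * y + γ * y ^ 2 = 0) : ∃ t, α * t ^ 2 + t + γ = 0 := by
  rcases eq_or_ne y 0 with rfl | hy
  · have hα : α = 0 := by simpa [hxy.resolve_right (not_not.2 rfl)] using h
    exact ⟨γ, by rw [hα, zero_mul, zero_add, CharTwo.add_self_eq_zero]⟩
  · refine ⟨x / y, ?_⟩
    field_simp
    linear_combination h

theorem hasLinearFactor_binForm_iff {α γ : F} :
    HasLinearFactor (binForm α γ) ↔ ∃ t, α * t ^ 2 + t + γ = 0 := by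
  constructor
  · rintro ⟨ℓ, hℓ, -, k, hk⟩
    obtain ⟨a, rfl⟩ := exists_eq_linForm hℓ
    -- `binForm α γ` vanishes wherever its linear factor does, e.g. at some `(0 : x : y) ≠ 0`
    obtain ⟨x, y, hxy, hℓxy⟩ := exists_ne_zero_linear_eq_zero (a 1) (a 2)
    have := congrArg (eval ![0, x, y]) hk
    rw [map_mul, eval_linForm, hℓxy, zero_mul] at this
    exact exists_root_of_nontrivial_zero hxy (by simpa [binForm] using this)
  · rintro ⟨t, ht⟩
    exact ⟨linForm ![0, 1, t], isHomogeneous_linForm _,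
      (linearIndependent_linForm_pair 0 t).ne_zero 0, _, binForm_eq_linForm_mul ht⟩

theorem not_isDoubleLine_span_binForm (α γ : F) : ¬ IsDoubleLine (F ∙ binForm α γ) :=
  not_isDoubleLine_span (by decide : (1 : Fin 3) ≠ 2) (by simp [qc_binForm_one_two])

theorem isRealPair_span_binForm_iff {α γ : F} :
    IsRealPair (F ∙ binForm α γ) ↔ ∃ t, α * t ^ 2 + t + γ = 0 := by
  refine ⟨fun h => hasLinearFactor_binForm_iff.1 (h.hasLinearFactor
    (Submodule.mem_span_singleton_self _) (binForm_ne_zero α γ)), fun ⟨t, ht⟩ => ?_⟩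
  rw [binForm_eq_linForm_mul ht]
  exact isRealPair_span_mul (isHomogeneous_linForm _) (isHomogeneous_linForm _)
    (linearIndependent_linForm_pair α t)

theorem isImagPair_span_binForm_iff {α γ : F} :
    IsImagPair (F ∙ binForm α γ) ↔ ¬ ∃ t, α * t ^ 2 + t + γ = 0 := by
  rw [isImagPair_span_iff (binForm_ne_zero α γ) (isSingular_binForm α γ),
    hasLinearFactor_binForm_iff]

end CharTwo

def doubleLinePencil (c : F) : Submodule F (Poly F) :=
  Submodule.span F {(C c * X 1 + X 2) ^ 2, X 1 * X 2}

section DoubleLinePencil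

variable (c : F)

theorem isHomogeneous_C_mul_X_add_X : (C c * X 1 + X 2 : Poly F).IsHomogeneous 1 :=
  (isHomogeneous_C_mul_X c 1).add (isHomogeneous_X F 2)

theorem C_mul_X_add_X_ne_zero : (C c * X 1 + X 2 : Poly F) ≠ 0 := fun h => by
  simpa [coeff_X, Finsupp.single_left_inj] using congrArg (coeff (Finsupp.single 2 1)) h

variable [CharP F 2]

theorem linearIndependent_doubleLinePencil :
    LinearIndependent F ![(C c * X 1 + X 2) ^ 2, (X 1 * X 2 : Poly F)] := by
  refine (LinearIndependent.pair_iff' (pow_ne_zero 2 (C_mul_X_add_X_ne_zero c))).2 fun a h => ?_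
  have := congrArg (qc · 1 2) h
  simp only [qc_smul, qc_sq (isHomogeneous_C_mul_X_add_X c) (by decide : (1 : Fin 3) ≠ 2),
    mul_zero, qc_X_mul_X] at this
  simp at this

theorem X_mul_X_add_smul_sq (s : F) :
    X 1 * X 2 + s • (C c * X 1 + X 2) ^ 2 = binForm (s * c ^ 2) s := by
  rw [binForm, smul_eq_C_mul, CharTwo.add_sq, mul_pow, map_mul, map_pow]
  ring

theorem binForm_mem_doubleLinePencil (s : F) : binForm (s * c ^ 2) s ∈ doubleLinePencil c :=
  X_mul_X_add_smul_sq c s ▸ Submodule.mem_span_pair.2 ⟨s, 1, by rw [one_smul, add_comm]⟩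

variable [Finite F]

open Classical in
theorem card_members_doubleLinePencil (Φ : Submodule F (Poly F) → Prop) :
    Nat.card {L // IsMember (doubleLinePencil c) L ∧ Φ L} =
      (if Φ (F ∙ (C c * X 1 + X 2) ^ 2) then 1 else 0) +
        Nat.card {s // Φ (F ∙ binForm (s * c ^ 2) s)} := by
  refine (card_pencilLine (linearIndependent_doubleLinePencil c) Φ).trans ?_
  rw [Nat.card_subtype_option]
  simp only [pencilLine, X_mul_X_add_smul_sq]
  congr

theorem a1_doubleLinePencil : a1 (doubleLinePencil c) = 1 := by
  rw [a1, card_members_doubleLinePencil, if_pos (isDoubleLine_span_sq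
    (isHomogeneous_C_mul_X_add_X c) (C_mul_X_add_X_ne_zero c))]
  simp [not_isDoubleLine_span_binForm]

theorem a2r_doubleLinePencil :
    a2r (doubleLinePencil c) = Nat.card {s : F // ∃ t, s * c ^ 2 * t ^ 2 + t + s = 0} := by
  rw [a2r, card_members_doubleLinePencil, if_neg (not_isRealPair_span_sq
    (isHomogeneous_C_mul_X_add_X c) (C_mul_X_add_X_ne_zero c)), zero_add]
  simp only [isRealPair_span_binForm_iff]

theorem a2i_doubleLinePencil :
    a2i (doubleLinePencil c) = Nat.card {s : F // ¬ ∃ t, s * c ^ 2 * t ^ 2 + t + s = 0} := by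
  rw [a2i, card_members_doubleLinePencil, if_neg, zero_add]
  · simp only [isImagPair_span_binForm_iff]
  · rw [isImagPair_span_iff (pow_ne_zero 2 (C_mul_X_add_X_ne_zero c))
      (isSingular_sq (isHomogeneous_C_mul_X_add_X c)), not_not]
    exact ⟨_, isHomogeneous_C_mul_X_add_X c, C_mul_X_add_X_ne_zero c, dvd_pow_self _ two_ne_zero⟩

theorem a3_doubleLinePencil : a3 (doubleLinePencil c) = 0 := by
  rw [a3, card_members_doubleLinePencil, if_neg (not_isNonsingularConic_span
    (pow_ne_zero 2 (C_mul_X_add_X_ne_zero c)) (isSingular_sq (isHomogeneous_C_mul_X_add_X c))),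
    zero_add]
  simp [not_isNonsingularConic_span (binForm_ne_zero _ _) (isSingular_binForm _ _)]

end DoubleLinePencil

theorem X_two_dvd_of_mem_doubleLinePencil_zero {f : Poly F}
    (hf : f ∈ doubleLinePencil (0 : F)) : X 2 ∣ f := by
  rw [← Ideal.mem_span_singleton]
  refine (Submodule.span_le (p := (Ideal.span {X 2}).restrictScalars F)).2 ?_ hf
  rintro _ (rfl | rfl) <;> simp [Ideal.mem_span_singleton]

theorem act_apply (M : Matrix (Fin 3) (Fin 3) F) (f : Poly F) :
    act M f = aeval (fun i => ∑ j, C (M i j) * X j) f := rfl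

theorem act_mul (M : Matrix (Fin 3) (Fin 3) F) (p q : Poly F) :
    act M (p * q) = act M p * act M q :=
  map_mul (aeval fun i => ∑ j, C (M i j) * X j) p q

theorem act_act (M N : Matrix (Fin 3) (Fin 3) F) (f : Poly F) :
    act M (act N f) = act (N * M) f := by
  simp only [act_apply, ← AlgHom.comp_apply, comp_aeval]
  congr 2
  funext i
  simp only [map_sum, map_mul, aeval_C, aeval_X, algebraMap_eq, Matrix.mul_apply, Finset.mul_sum]
  rw [Finset.sum_comm]
  refine Finset.sum_congr rfl fun k _ => ?_
  rw [Finset.sum_mul]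
  exact Finset.sum_congr rfl fun j _ => (mul_assoc _ _ _).symm

theorem act_one (f : Poly F) : act 1 f = f := by
  rw [act_apply, show (fun i => ∑ j, C ((1 : Matrix (Fin 3) (Fin 3) F) i j) * X j) = X by
    funext i; simp [Matrix.one_apply], aeval_X_left_apply]

theorem act_inv_act (g : (Matrix (Fin 3) (Fin 3) F)ˣ) (p : Poly F) :
    act g⁻¹.val (act g.val p) = p := by
  rw [act_act, ← Units.val_mul, mul_inv_cancel, Units.val_one, act_one]

theorem act_act_inv (g : (Matrix (Fin 3) (Fin 3) F)ˣ) (p : Poly F) :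
    act g.val (act g⁻¹.val p) = p :=
  act_inv_act g⁻¹ p

theorem hasLinearFactor_of_X_dvd_act (g : (Matrix (Fin 3) (Fin 3) F)ˣ) {f : Poly F} {i : Fin 3}
    (h : X i ∣ act g.val f) : HasLinearFactor f := by
  obtain ⟨k, hk⟩ := h
  refine ⟨act g⁻¹.val (X i), ?_, fun h0 => X_ne_zero (R := F) i ?_, act g⁻¹.val k, ?_⟩
  · rw [act_apply, aeval_X]
    exact IsHomogeneous.sum _ _ _ fun j _ => isHomogeneous_C_mul_X _ j
  · rw [← act_act_inv g (X i), h0, map_zero]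
  · rw [← act_inv_act g f, hk, act_mul]

theorem map_act_ne_of_forall_X_dvd {W W' : Submodule F (Poly F)} {f : Poly F} (hf : f ∈ W)
    (hfac : ¬ HasLinearFactor f) {i : Fin 3} (hW' : ∀ f' ∈ W', X i ∣ f')
    (g : (Matrix (Fin 3) (Fin 3) F)ˣ) : W.map (act g.val) ≠ W' := fun h =>
  hfac (hasLinearFactor_of_X_dvd_act g (hW' _ (h ▸ Submodule.mem_map_of_mem hf)))

/-- the pencils `W1 = ⟨(X1+X2)², X1·X2⟩` and `W2 = ⟨X2², X1·X2⟩` have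
hyperplane-orbit distributions `(1, q/2, q/2, 0)` and `(1, q, 0, 0)` respectively;
in particular they are not `GL(3,F)`-equivalent. -/
theorem omega1_omega2_distinct (F : Type*) [Field F] [Fintype F] [CharP F 2] :
    let W1 : Submodule F (Poly F) := Submodule.span F {(X 1 + X 2) ^ 2, X 1 * X 2}
    let W2 : Submodule F (Poly F) := Submodule.span F {X 2 ^ 2, X 1 * X 2}
    (a1 W1, a2r W1, a2i W1, a3 W1) = (1, Fintype.card F / 2, Fintype.card F / 2, 0) ∧
    (a1 W2, a2r W2, a2i W2, a3 W2) = (1, Fintype.card F, 0, 0) ∧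
    ¬ ∃ g : (Matrix (Fin 3) (Fin 3) F)ˣ, Submodule.map (act g.val) W1 = W2 := by
  intro W1 W2
  have hW1 : W1 = doubleLinePencil 1 := by simp [W1, doubleLinePencil]
  have hW2 : W2 = doubleLinePencil 0 := by simp [W2, doubleLinePencil]
  have hroot := card_exists_root (F := F)
  have hnroot := card_not_exists_root (F := F)
  rw [Nat.card_eq_fintype_card (α := F)] at hroot hnroot
  refine ⟨?_, ?_, ?_⟩
  · rw [hW1, a1_doubleLinePencil, a2r_doubleLinePencil, a2i_doubleLinePencil,
      a3_doubleLinePencil]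
    simp only [one_pow, mul_one]
    ext <;> simp only <;> omega
  · rw [hW2, a1_doubleLinePencil, a2r_doubleLinePencil, a2i_doubleLinePencil,
      a3_doubleLinePencil]
    simp [CharTwo.add_eq_zero]
  · rintro ⟨g, hg⟩
    obtain ⟨s, hs⟩ := exists_not_exists_root (F := F)
    refine map_act_ne_of_forall_X_dvd (binForm_mem_doubleLinePencil 1 s) ?_
      (fun f hf => X_two_dvd_of_mem_doubleLinePencil_zero (hW2 ▸ hf)) g (hW1 ▸ hg)
    rwa [hasLinearFactor_binForm_iff, one_pow, mul_one]

end Pencils
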